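/- Let H, r, μ be as in the general setup and let A, B be nonempty disjoint subsets of H. Let r†(x,y) = μ(y)r(y,x)/μ(x) be the adjoint rates (for which μ is again the stationary distribution), let h†_{A,B} be the equilibrium potential between A and B for r†, and let CAP†(A,B) = (1/2)·Σ_{x,y∈H} μ(x)r†(x,y)(h†_{A,B}(y) − h†_{A,B}(x))² be the corresponding capacity. Then CAP(A,B) = CAP†(A,B). -/
import Mathlib


open Finset

variable {H : Type*}

/-- The symmetrized conductance `c^s(x,y) = (μ(x)r(x,y) + μ(y)r(y,x))/2`. -/
noncomputable def sconduct (μ : H → ℝ) (r : H → H → ℝ) (x y : H) : ℝ :=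
  (μ x * r x y + μ y * r y x) / 2

/-- A flow: an antisymmetric function on pairs, supported on the edge set
`E = {(x,y) : c^s(x,y) > 0}`. -/
def IsFlow (μ : H → ℝ) (r : H → H → ℝ) (φ : H → H → ℝ) : Prop :=
  (∀ x y, φ x y = -φ y x) ∧ ∀ x y, sconduct μ r x y = 0 → φ x y = 0

/-- The squared flow norm `‖φ‖² = (1/2) Σ_{(x,y)} φ(x,y)²/c^s(x,y)`. -/
noncomputable def flowNorm2 [Fintype H] (μ : H → ℝ) (r : H → H → ℝ) (φ : H → H → ℝ) : ℝ :=
  (1 / 2) * ∑ x, ∑ y, φ x y ^ 2 / sconduct μ r x y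

/-- The divergence `(DIV φ)(x) = Σ_y φ(x,y)`. -/
noncomputable def flowDiv [Fintype H] (φ : H → H → ℝ) (x : H) : ℝ := ∑ y, φ x y

/-- The flow `Φ_f(x,y) = f(y)c(y,x) − f(x)c(x,y)` associated to a function `f`. -/
noncomputable def PhiFlow (μ : H → ℝ) (r : H → H → ℝ) (f : H → ℝ) (x y : H) : ℝ :=
  f y * (μ y * r y x) - f x * (μ x * r x y)

/-- The flow `Φ*_f(x,y) = f(y)c(x,y) − f(x)c(y,x)` associated to a function `f`. -/
noncomputable def PhiStar (μ : H → ℝ) (r : H → H → ℝ) (f : H → ℝ) (x y : H) : ℝ :=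
  f y * (μ x * r x y) - f x * (μ y * r y x)

/-- The capacity (Dirichlet form) `(1/2) Σ_{x,y} μ(x)r(x,y)(h(y)−h(x))²` of a function. -/
noncomputable def capacityOf [Fintype H] (μ : H → ℝ) (r : H → H → ℝ) (h : H → ℝ) : ℝ :=
  (1 / 2) * ∑ x, ∑ y, μ x * r x y * (h y - h x) ^ 2

/-- `h` is the equilibrium potential between `A` and `B` for the rates `r`:
`h ≡ 1` on `A`, `h ≡ 0` on `B`, and `h` is harmonic off `A ∪ B`. -/
def IsEqPotential [Fintype H] (r : H → H → ℝ) (A B : Set H) (h : H → ℝ) : Prop :=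
  (∀ a ∈ A, h a = 1) ∧ (∀ b ∈ B, h b = 0) ∧
    ∀ x, x ∉ A ∪ B → ∑ y, r x y * (h y - h x) = 0

noncomputable def Eform [Fintype H] (c : H → H → ℝ) (f g : H → ℝ) : ℝ :=
  ∑ x, f x * ∑ y, c x y * (g x - g y)

lemma swap_u [Fintype H] (c : H → H → ℝ) (hbal : ∀ x, ∑ y, c y x = ∑ y, c x y)
    (u : H → ℝ) : ∑ x, ∑ y, c x y * u y = ∑ x, ∑ y, c x y * u x := by
  calc ∑ x, ∑ y, c x y * u y = ∑ y, ∑ x, c x y * u y := Finset.sum_comm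
    _ = ∑ y, (∑ x, c x y) * u y := by simp [Finset.sum_mul]
    _ = ∑ y, (∑ x, c y x) * u y := by
        refine Finset.sum_congr rfl fun y _ => ?_
        rw [hbal y]
    _ = ∑ y, ∑ x, c y x * u y := by simp [Finset.sum_mul]
    _ = ∑ x, ∑ y, c x y * u x := rfl

lemma quad_eq [Fintype H] (c : H → H → ℝ) (hbal : ∀ x, ∑ y, c y x = ∑ y, c x y)
    (g : H → ℝ) :
    (1/2 : ℝ) * ∑ x, ∑ y, c x y * (g y - g x) ^ 2 = Eform c g g := by
  have h1 := swap_u c hbal (fun z => g z ^ 2)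
  have h2 : ∀ x y : H, c x y * (g y - g x) ^ 2
      = 2 * (g x * (c x y * (g x - g y))) + (c x y * g y ^ 2 - c x y * g x ^ 2) := by
    intro x y; ring
  have h3 : Eform c g g = ∑ x, ∑ y, g x * (c x y * (g x - g y)) := by
    simp [Eform, Finset.mul_sum]
  rw [h3]
  calc (1/2 : ℝ) * ∑ x, ∑ y, c x y * (g y - g x) ^ 2
      = (1/2 : ℝ) * ∑ x, ∑ y, (2 * (g x * (c x y * (g x - g y)))
          + (c x y * g y ^ 2 - c x y * g x ^ 2)) := by
        simp only [h2]
    _ = (1/2 : ℝ) * (2 * (∑ x, ∑ y, g x * (c x y * (g x - g y)))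
          + ((∑ x, ∑ y, c x y * g y ^ 2) - ∑ x, ∑ y, c x y * g x ^ 2)) := by
        simp [Finset.sum_add_distrib, Finset.sum_sub_distrib, Finset.mul_sum]
    _ = ∑ x, ∑ y, g x * (c x y * (g x - g y)) := by rw [h1]; ring

lemma Eform_dual [Fintype H] (c : H → H → ℝ) (hbal : ∀ x, ∑ y, c y x = ∑ y, c x y)
    (f g : H → ℝ) :
    Eform c f g = Eform (fun x y => c y x) g f := by
  have e1 : Eform c f g
      = (∑ x, ∑ y, c x y * (f x * g x)) - ∑ x, ∑ y, c x y * (f x * g y) := by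
    simp only [Eform, Finset.mul_sum, ← Finset.sum_sub_distrib]
    exact Finset.sum_congr rfl fun x _ => Finset.sum_congr rfl fun y _ => by ring
  have e2 : Eform (fun x y => c y x) g f
      = (∑ x, ∑ y, c y x * (f x * g x)) - ∑ x, ∑ y, c y x * (g x * f y) := by
    simp only [Eform, Finset.mul_sum, ← Finset.sum_sub_distrib]
    exact Finset.sum_congr rfl fun x _ => Finset.sum_congr rfl fun y _ => by ring
  rw [e1, e2]
  have t1 : ∑ x, ∑ y, c y x * (f x * g x) = ∑ x, ∑ y, c x y * (f x * g x) := by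
    calc ∑ x, ∑ y, c y x * (f x * g x) = ∑ x, (∑ y, c y x) * (f x * g x) := by
          simp [Finset.sum_mul]
      _ = ∑ x, (∑ y, c x y) * (f x * g x) := by
          exact Finset.sum_congr rfl fun x _ => by rw [hbal x]
      _ = ∑ x, ∑ y, c x y * (f x * g x) := by simp [Finset.sum_mul]
  have t2 : ∑ x, ∑ y, c y x * (g x * f y) = ∑ x, ∑ y, c x y * (f x * g y) := by
    calc ∑ x, ∑ y, c y x * (g x * f y) = ∑ y, ∑ x, c y x * (g x * f y) := Finset.sum_comm
      _ = ∑ x, ∑ y, c x y * (f x * g y) := by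
          exact Finset.sum_congr rfl fun x _ => Finset.sum_congr rfl fun y _ => by ring
  rw [t1, t2]

lemma Eform_congr [Fintype H] (c : H → H → ℝ) (A B : Set H) (g f f' : H → ℝ)
    (hg : ∀ x, x ∉ A ∪ B → ∑ y, c x y * (g x - g y) = 0)
    (hf : ∀ x, x ∈ A ∪ B → f x = f' x) :
    Eform c f g = Eform c f' g := by
  refine Finset.sum_congr rfl fun x _ => ?_
  by_cases hx : x ∈ A ∪ B
  · rw [hf x hx]
  · rw [hg x hx]; ring

/-- **Time symmetry of the capacity** (Proposition `prop:time symmetry of capacity`):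
the capacity between `A` and `B` for the rates `r` equals the capacity for the adjoint
rates `r†(x,y) = μ(y)r(y,x)/μ(x)`. -/
theorem capacity_time_symmetry [Fintype H]
    (r : H → H → ℝ) (hr : ∀ x y, 0 ≤ r x y) (hrr : ∀ x, r x x = 0)
    (hirr : ∀ x y : H, Relation.ReflTransGen (fun a b => 0 < r a b) x y)
    (μ : H → ℝ) (hμpos : ∀ x, 0 < μ x) (hμsum : ∑ x, μ x = 1)
    (hμstat : ∀ x, ∑ y, μ y * r y x = μ x * ∑ y, r x y)
    (A B : Set H) (hA : A.Nonempty) (hB : B.Nonempty) (hAB : Disjoint A B)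
    (h hd : H → ℝ)
    (hh : IsEqPotential r A B h)
    (hhd : IsEqPotential (fun x y => μ y * r y x / μ x) A B hd) :
    capacityOf μ r h = capacityOf μ (fun x y => μ y * r y x / μ x) hd := by
  obtain ⟨hA1, hB0, hharm⟩ := hh
  obtain ⟨hdA1, hdB0, hdharm⟩ := hhd
  have hbal : ∀ x, ∑ y, (fun x y => μ x * r x y) y x = ∑ y, (fun x y => μ x * r x y) x y := by
    intro x
    simpa [Finset.mul_sum] using hμstat x
  have hbalT : ∀ x, ∑ y, (fun x y => μ y * r y x) y x = ∑ y, (fun x y => μ y * r y x) x y :=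
    fun x => (hbal x).symm
  have hharm' : ∀ x, x ∉ A ∪ B →
      ∑ y, (fun x y => μ x * r x y) x y * (h x - h y) = 0 := by
    intro x hx
    have e : ∑ y, μ x * r x y * (h x - h y)
        = (-(μ x)) * ∑ y, r x y * (h y - h x) := by
      rw [Finset.mul_sum]
      exact Finset.sum_congr rfl fun y _ => by ring
    simpa [e, hharm x hx] using e.trans (by rw [hharm x hx, mul_zero])
  have hdharm' : ∀ x, x ∉ A ∪ B →
      ∑ y, (fun x y => μ x * r x y) y x * (hd x - hd y) = 0 := by
    intro x hx
    have hx0 : μ x ≠ 0 := (hμpos x).ne'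
    have e : ∑ y, μ y * r y x * (hd x - hd y)
        = (-(μ x)) * ∑ y, (μ y * r y x / μ x) * (hd y - hd x) := by
      rw [Finset.mul_sum]
      refine Finset.sum_congr rfl fun y _ => ?_
      field_simp
      ring
    have := hdharm x hx
    simp only at this
    simpa using e.trans (by rw [this, mul_zero])
  have hagree : ∀ x, x ∈ A ∪ B → h x = hd x := by
    intro x hx
    rcases hx with hx | hx
    · rw [hA1 x hx, hdA1 x hx]
    · rw [hB0 x hx, hdB0 x hx]
  have step1 : capacityOf μ r h = Eform (fun x y => μ x * r x y) h h := by
    rw [← quad_eq _ hbal h]; rfl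
  have step2 : Eform (fun x y => μ x * r x y) h h
      = Eform (fun x y => μ x * r x y) hd h :=
    Eform_congr _ A B h h hd hharm' hagree
  have step3 : Eform (fun x y => μ x * r x y) hd h
      = Eform (fun x y => μ y * r y x) h hd :=
    Eform_dual _ hbal hd h
  have step4 : Eform (fun x y => μ y * r y x) h hd
      = Eform (fun x y => μ y * r y x) hd hd :=
    Eform_congr _ A B hd h hd hdharm' hagree
  have step5 : Eform (fun x y => μ y * r y x) hd hd
      = (1/2 : ℝ) * ∑ x, ∑ y, μ y * r y x * (hd y - hd x) ^ 2 :=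
    (quad_eq _ hbalT hd).symm
  have step6 : capacityOf μ (fun x y => μ y * r y x / μ x) hd
      = (1/2 : ℝ) * ∑ x, ∑ y, μ y * r y x * (hd y - hd x) ^ 2 := by
    unfold capacityOf
    congr 1
    refine Finset.sum_congr rfl fun x _ => Finset.sum_congr rfl fun y _ => ?_
    have hx0 : μ x ≠ 0 := (hμpos x).ne'
    field_simp
  rw [step1, step2, step3, step4, step5, ← step6]
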